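/- The graph on the set B^n of non-crossing perfect matchings of {1,...,2n}, with edges given by single nesting/unnesting moves (a ~ b iff a → b or b → a), is connected; consequently the distance function d(a,b) is well-defined and finite for all a, b ∈ B^n. -/

import Mathlib

def IsMatching (n : ℕ) (f : ℕ → ℕ) : Prop :=
  (∀ m, 1 ≤ m → m ≤ 2 * n → (1 ≤ f m ∧ f m ≤ 2 * n ∧ f (f m) = m ∧ f m ≠ m)) ∧
  (∀ m, (m < 1 ∨ 2 * n < m) → f m = m)

def NonCrossing (f : ℕ → ℕ) : Prop :=
  ¬ ∃ i j k l : ℕ, i < j ∧ j < k ∧ k < l ∧ f i = k ∧ f j = l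

def MoveAt (a b : ℕ → ℕ) (i j k l : ℕ) : Prop :=
  i < j ∧ j < k ∧ k < l ∧
  a i = j ∧ a j = i ∧ a k = l ∧ a l = k ∧
  b i = l ∧ b l = i ∧ b j = k ∧ b k = j ∧
  ∀ m, m ∉ ({i, j, k, l} : Set ℕ) → b m = a m

def Move (a b : ℕ → ℕ) : Prop := ∃ i j k l, MoveAt a b i j k l

def Bn (n : ℕ) : Type := {f : ℕ → ℕ // IsMatching n f ∧ NonCrossing f}

/-- Adjacency: one nesting or unnesting move. -/
def Adj (a b : ℕ → ℕ) : Prop := Move a b ∨ Move b a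

def IsPath (n m : ℕ) (p : ℕ → Bn n) (a b : Bn n) : Prop :=
  p 0 = a ∧ p m = b ∧ ∀ i < m, Adj (p i).1 (p (i + 1)).1

/-! Measure a matching by its total arc length. If some arc is longer than one step, then
following nested arcs inwards (non-crossing forces `f (i + 1)` to lie strictly inside the arc
`{i, f i}`) reaches an arc `{j, f j}` directly enclosing the unit arc `{j + 1, j + 2}`. Replacing
these two arcs by `{j, j + 1}` and `{j + 2, f j}` undoes a single move, keeps the matching
non-crossing, and shortens the total length by two. A matching all of whose arcs are unit arcs is
the outermost matching `{1, 2}, {3, 4}, …`, so every matching is joined to it. -/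

open Function

theorem Relation.ReflTransGen.exists_seq {α : Type*} {r : α → α → Prop} {a b : α}
    (h : Relation.ReflTransGen r a b) :
    ∃ (m : ℕ) (p : ℕ → α), p 0 = a ∧ p m = b ∧ ∀ i < m, r (p i) (p (i + 1)) := by
  induction h using Relation.ReflTransGen.head_induction_on with
  | refl => exact ⟨0, fun _ => b, rfl, rfl, by simp⟩
  | head hac _ ih =>
    obtain ⟨m, p, hp0, hpm, hp⟩ := ih
    refine ⟨m + 1, fun | 0 => _ | i + 1 => p i, rfl, hpm, ?_⟩
    rintro (_ | i) hi
    · simpa [hp0] using hac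
    · exact hp i (by omega)

def outermost (n m : ℕ) : ℕ :=
  if 1 ≤ m ∧ m ≤ 2 * n then (if m % 2 = 1 then m + 1 else m - 1) else m

theorem isMatching_outermost (n : ℕ) : IsMatching n (outermost n) := by
  refine ⟨fun m h1 h2 => ?_, fun m hm => by simp only [outermost]; split_ifs <;> omega⟩
  simp only [outermost]
  split_ifs <;> omega

theorem nonCrossing_outermost (n : ℕ) : NonCrossing (outermost n) := by
  rintro ⟨i, j, k, l, hij, hjk, hkl, hi, hj⟩
  simp only [outermost] at hi
  split_ifs at hi <;> omega

def outermostB (n : ℕ) : Bn n := ⟨outermost n, isMatching_outermost n, nonCrossing_outermost n⟩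

namespace IsMatching

variable {n : ℕ} {f : ℕ → ℕ} {m : ℕ}

theorem mem_Icc_of_apply_ne (hf : IsMatching n f) (h : f m ≠ m) : 1 ≤ m ∧ m ≤ 2 * n := by
  by_contra hm
  exact h (hf.2 m (by omega))

theorem apply_le_of_ne (hf : IsMatching n f) (h : f m ≠ m) : f m ≤ 2 * n :=
  (hf.1 m (hf.mem_Icc_of_apply_ne h).1 (hf.mem_Icc_of_apply_ne h).2).2.1

theorem apply_apply_of_ne (hf : IsMatching n f) (h : f m ≠ m) : f (f m) = m :=
  (hf.1 m (hf.mem_Icc_of_apply_ne h).1 (hf.mem_Icc_of_apply_ne h).2).2.2.1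

theorem apply_add_two (hf : IsMatching n f) (h : f (m + 1) = m + 2) : f (m + 2) = m + 1 :=
  h ▸ hf.apply_apply_of_ne (by omega)

end IsMatching

theorem eq_outermost_of_le_succ {n : ℕ} {f : ℕ → ℕ} (hf : IsMatching n f)
    (h : ∀ m, f m ≤ m + 1) : f = outermost n := by
  have key : ∀ m, 1 ≤ m → m ≤ 2 * n → f m = if m % 2 = 1 then m + 1 else m - 1 := by
    intro m
    induction m using Nat.strong_induction_on with
    | _ m ih =>
      intro h1 h2
      obtain ⟨hfm1, hfm2, hffm, hfm⟩ := hf.1 m h1 h2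
      rcases Nat.mod_two_eq_zero_or_one m with hm | hm
      · have hprev : f (m - 1) = m := by
          have := ih (m - 1) (by omega) (by omega) (by omega)
          rw [if_pos (by omega)] at this
          omega
        have := (hf.1 (m - 1) (by omega) (by omega)).2.2.1
        rw [hprev] at this
        rw [if_neg (by omega), this]
      · rw [if_pos hm]
        have := h m
        rcases lt_or_gt_of_ne hfm with hlt | hgt
        · have := ih (f m) hlt hfm1 hfm2
          rw [hffm] at this
          split_ifs at this <;> omega
        · omega
  funext m
  by_cases hm : 1 ≤ m ∧ m ≤ 2 * n
  · rw [key m hm.1 hm.2, outermost, if_pos hm]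
  · rw [hf.2 m (by omega), outermost, if_neg hm]

theorem exists_nested_unit_arc {n : ℕ} {f : ℕ → ℕ} (hf : IsMatching n f)
    (hnc : NonCrossing f) : ∀ i, i + 1 < f i → ∃ j, j + 2 < f j ∧ f (j + 1) = j + 2 := by
  intro i
  induction h : f i - i using Nat.strong_induction_on generalizing i with
  | _ d ih =>
    intro hi
    subst h
    have hfi := hf.apply_le_of_ne (m := i) (by omega)
    have hffi := hf.apply_apply_of_ne (m := i) (by omega)
    obtain ⟨-, -, hffq, hq⟩ := hf.1 (i + 1) (by omega) (by omega)
    have hqi : f (i + 1) ≠ i := fun h => by rw [h] at hffq; omega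
    have hqfi : f (i + 1) ≠ f i := fun h => by rw [h, hffi] at hffq; omega
    have hq_gt : i < f (i + 1) := by
      by_contra! hle
      exact hnc ⟨f (i + 1), i, i + 1, f i, by omega, by omega, by omega, hffq, rfl⟩
    have hq_lt : f (i + 1) < f i := by
      by_contra! hle
      exact hnc ⟨i, i + 1, f i, f (i + 1), by omega, by omega, by omega, rfl, rfl⟩
    by_cases hq2 : f (i + 1) = i + 2
    · exact ⟨i, by omega, hq2⟩
    · exact ih _ (by omega) (i + 1) rfl (by omega)

def unnest (f : ℕ → ℕ) (i l : ℕ) (m : ℕ) : ℕ :=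
  if m = i then i + 1 else if m = i + 1 then i else if m = i + 2 then l
  else if m = l then i + 2 else f m

section Unnest

variable {n : ℕ} {f : ℕ → ℕ} {i : ℕ}

@[simp] theorem unnest_apply_self (l : ℕ) : unnest f i l i = i + 1 := by simp [unnest]

@[simp] theorem unnest_apply_succ (l : ℕ) : unnest f i l (i + 1) = i := by simp [unnest]

@[simp] theorem unnest_apply_add_two (l : ℕ) : unnest f i l (i + 2) = l := by simp [unnest]

theorem unnest_apply_right {l : ℕ} (h : i + 2 < l) : unnest f i l l = i + 2 := by
  simp only [unnest, if_neg (show l ≠ i by omega), if_neg (show l ≠ i + 1 by omega),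
    if_neg (show l ≠ i + 2 by omega), if_pos]

theorem unnest_apply_of_ne {l m : ℕ} (hi : m ≠ i) (hi1 : m ≠ i + 1) (hi2 : m ≠ i + 2)
    (hl : m ≠ l) : unnest f i l m = f m := by
  simp only [unnest, if_neg hi, if_neg hi1, if_neg hi2, if_neg hl]

theorem isMatching_unnest (hf : IsMatching n f) (hil : i + 2 < f i)
    (hi1 : f (i + 1) = i + 2) : IsMatching n (unnest f i (f i)) := by
  have hi := hf.mem_Icc_of_apply_ne (m := i) (by omega)
  have hfi := hf.apply_le_of_ne (m := i) (by omega)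
  have hffi := hf.apply_apply_of_ne (m := i) (by omega)
  have hi2 := hf.apply_add_two hi1
  refine ⟨fun m h1 h2 => ?_, fun m hm => ?_⟩
  · obtain ⟨hfm1, hfm2, hffm, hfm⟩ := hf.1 m h1 h2
    simp only [unnest]
    split_ifs <;> grind
  · simp only [unnest]
    split_ifs <;> grind [hf.2 m hm]

theorem nonCrossing_unnest (hnc : NonCrossing f) (hil : i + 2 < f i) :
    NonCrossing (unnest f i (f i)) := by
  rintro ⟨p, q, r, t, hpq, hqr, hrt, hp, hq⟩
  simp only [unnest] at hp hq
  -- Besides the untouched arcs of `f`, a crossing must involve the new arc `{i + 2, f i}`,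
  -- and then an arc of `f` crosses `{i, f i}`.
  split_ifs at hp hq <;> first
    | omega
    | exact hnc ⟨p, q, r, t, hpq, hqr, hrt, hp, hq⟩
    | exact hnc ⟨i, q, f i, t, by omega, by omega, by omega, rfl, hq⟩
    | exact hnc ⟨p, i, r, f i, by omega, by omega, by omega, hp, rfl⟩

theorem moveAt_unnest (hf : IsMatching n f) (hil : i + 2 < f i) (hi1 : f (i + 1) = i + 2) :
    MoveAt (unnest f i (f i)) f i (i + 1) (i + 2) (f i) := by
  have hffi := hf.apply_apply_of_ne (m := i) (by omega)
  have hi2 := hf.apply_add_two hi1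
  refine ⟨by omega, by omega, hil, ?_, ?_, ?_, ?_, rfl, hffi, hi1, hi2, fun m hm => ?_⟩
  · exact unnest_apply_self _
  · exact unnest_apply_succ _
  · exact unnest_apply_add_two _
  · exact unnest_apply_right hil
  · simp only [Set.mem_insert_iff, Set.mem_singleton_iff, not_or] at hm
    exact (unnest_apply_of_ne hm.1 hm.2.1 hm.2.2.1 hm.2.2.2).symm

def totalArcLength (n : ℕ) (f : ℕ → ℕ) : ℕ := ∑ m ∈ Finset.Icc 1 (2 * n), (f m - m)

theorem totalArcLength_unnest_add_two (hf : IsMatching n f) (hil : i + 2 < f i)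
    (hi1 : f (i + 1) = i + 2) :
    totalArcLength n (unnest f i (f i)) + 2 = totalArcLength n f := by
  have hi := hf.mem_Icc_of_apply_ne (m := i) (by omega)
  have hfi := hf.apply_le_of_ne (m := i) (by omega)
  have hffi := hf.apply_apply_of_ne (m := i) (by omega)
  have hi2 := hf.apply_add_two hi1
  have hT : ({i, i + 1, i + 2, f i} : Finset ℕ) ⊆ Finset.Icc 1 (2 * n) := by
    intro m hm
    simp only [Finset.mem_insert, Finset.mem_singleton] at hm
    rw [Finset.mem_Icc]
    omega
  have hrest : ∀ m ∈ Finset.Icc 1 (2 * n) \ {i, i + 1, i + 2, f i},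
      unnest f i (f i) m - m = f m - m := by
    intro m hm
    simp only [Finset.mem_sdiff, Finset.mem_insert, Finset.mem_singleton, not_or] at hm
    rw [unnest_apply_of_ne hm.2.1 hm.2.2.1 hm.2.2.2.1 hm.2.2.2.2]
  simp only [totalArcLength, ← Finset.sum_sdiff hT, Finset.sum_congr rfl hrest]
  rw [Finset.sum_insert (by simp; omega), Finset.sum_insert (by simp; omega),
    Finset.sum_insert (by simp; omega), Finset.sum_singleton,
    Finset.sum_insert (by simp; omega), Finset.sum_insert (by simp; omega),
    Finset.sum_insert (by simp; omega), Finset.sum_singleton]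
  rw [unnest_apply_self, unnest_apply_succ, unnest_apply_add_two, unnest_apply_right hil, hi1,
    hi2, hffi]
  omega

end Unnest

theorem reflTransGen_outermostB {n : ℕ} (x : Bn n) :
    Relation.ReflTransGen (Adj on Subtype.val) x (outermostB n) := by
  induction h : totalArcLength n x.1 using Nat.strong_induction_on generalizing x with
  | _ d ih =>
    obtain ⟨f, hf, hnc⟩ := x
    by_cases hshort : ∀ m, f m ≤ m + 1
    · rw [show (⟨f, hf, hnc⟩ : Bn n) = outermostB n from
        Subtype.ext (eq_outermost_of_le_succ hf hshort)]
      exact .refl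
    · push Not at hshort
      obtain ⟨m, hm⟩ := hshort
      obtain ⟨i, hil, hi1⟩ := exists_nested_unit_arc hf hnc m hm
      let g : Bn n := ⟨unnest f i (f i), isMatching_unnest hf hil hi1, nonCrossing_unnest hnc hil⟩
      have hlen : totalArcLength n g.1 + 2 = d := (totalArcLength_unnest_add_two hf hil hi1).trans h
      exact .head (Or.inr ⟨_, _, _, _, moveAt_unnest hf hil hi1⟩) (ih _ (by omega) g rfl)

/-- The move-graph on `B^n` is connected: any two non-crossing matchings are
joined by a sequence of nesting/unnesting moves, so the graph distance is
well-defined and finite. -/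
theorem stmt18 (n : ℕ) (a b : Bn n) :
    Relation.ReflTransGen Adj a.1 b.1 ∧
    ∃ (m : ℕ) (p : ℕ → Bn n), IsPath n m p a b := by
  have hab : Relation.ReflTransGen (Adj on Subtype.val) a b :=
    (reflTransGen_outermostB a).trans
      (Relation.ReflTransGen.mono (fun _ _ h => Or.symm h) _ _
        (Relation.ReflTransGen.swap _ _ (reflTransGen_outermostB b)))
  exact ⟨hab.lift Subtype.val fun _ _ h => h, hab.exists_seq⟩
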